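/- Let $m \geq 0$ be an integer. Then for all $t \in \mathbb{R}$, $$\frac{2}{\sqrt{\pi}}\sum_{j=0}^m (4j+5)\,\Gamma\!\left(j+\tfrac{5}{2}\right)\frac{(-1)^j}{j!}\,P_{2j+2}(t) = (-1)^m\,\frac{4\,\Gamma\!\left(m+\tfrac{7}{2}\right)}{\sqrt{\pi}\,\Gamma(m+1)\,(4m+7)}\,\Bigl[(2m+4)\,P_m^{(0,3/2)}(2t^2-1) + (2m+3)\,P_{m+1}^{(0,3/2)}(2t^2-1)\Bigr].$$ -/

import Mathlib

open Real Filter Finset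

noncomputable def poch (a : ℝ) (k : ℕ) : ℝ := (ascPochhammer ℝ k).eval a

/-- Legendre polynomial of degree `n` (Rodrigues formula), the orthogonal polynomial
on `[-1,1]` with weight `1` normalized by `P n 1 = 1`. -/
noncomputable def legendreP (n : ℕ) : ℝ → ℝ :=
  fun x => (1 / ((2:ℝ) ^ n * (Nat.factorial n : ℝ))) *
    iteratedDeriv n (fun y : ℝ => (y ^ 2 - 1) ^ n) x

/-- Jacobi polynomial `P_k^{(α,β)}(x) = ((α+1)_k / k!) ₂F₁(-k, k+α+β+1; α+1; (1-x)/2)`. -/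
noncomputable def jacobiP (k : ℕ) (α β : ℝ) (x : ℝ) : ℝ :=
  (poch (α + 1) k / (Nat.factorial k : ℝ)) *
    ∑ i ∈ Finset.range (k + 1),
      poch (-(k : ℝ)) i * poch ((k : ℝ) + α + β + 1) i /
        (poch (α + 1) i * (Nat.factorial i : ℝ)) * ((1 - x) / 2) ^ i

/-!
With `x = 1 - t²`, both sides are terminating hypergeometric polynomials `₂F₁(-n, b; 1; x)`:
the quadratic transformation `P_{2k}(t) = ₂F₁(-k, k + 1/2; 1; 1 - t²)` follows from Rodrigues'
formula once the inner sums of the re-expansion in powers of `t²` are evaluated by Chu–Vandermonde,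
and `P_k^{(0,β)}(2t² - 1) = ₂F₁(-k, k + β + 1; 1; 1 - t²)` is the definition. The identity is then
proved by induction on `m`: each step is a three-term contiguous relation between
`₂F₁(-k, k + 5/2; 1; x)`, `k = m, m + 1, m + 2`, and `₂F₁(-m - 2, m + 5/2; 1; x)`, checked
coefficientwise. Only `Γ(s + 1) = s Γ(s)` is needed, so `√π` never has to be evaluated.
-/

open scoped Nat

open Polynomial in
lemma poch_add (a : ℝ) (r s : ℕ) : poch a (r + s) = poch a r * poch (a + r) s := by
  simp [poch, ← ascPochhammer_mul, eval_comp]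

lemma poch_zero (a : ℝ) : poch a 0 = 1 := by simp [poch]

lemma poch_succ (a : ℝ) (k : ℕ) : poch a (k + 1) = poch a k * (a + k) := by
  simp [poch, ascPochhammer_succ_eval]

lemma poch_succ_left (a : ℝ) (k : ℕ) : poch a (k + 1) = a * poch (a + 1) k := by
  simpa [poch, add_comm 1 k] using poch_add a 1 k

lemma poch_one (k : ℕ) : poch 1 k = k ! := ascPochhammer_eval_one ℝ k

lemma poch_natCast_add_one (n k : ℕ) : poch (n + 1) k = (n + k)! / n ! := by
  rw [poch, ← factorial_mul_ascPochhammer ℝ n k]; field_simp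

lemma poch_pos {a : ℝ} (ha : 0 < a) (k : ℕ) : 0 < poch a k := ascPochhammer_pos k a ha

lemma poch_neg (a : ℝ) (k : ℕ) : poch (-a) k = (-1) ^ k * poch (a - k + 1) k := by
  rw [poch, ascPochhammer_eval_neg_eq_descPochhammer, descPochhammer_eval_eq_ascPochhammer, poch]

lemma poch_neg_natCast_of_lt {k i : ℕ} (h : k < i) : poch (-k) i = 0 :=
  ascPochhammer_eval_neg_coe_nat_of_lt h

lemma poch_add_one_eq {a : ℝ} (ha : a ≠ 0) (k : ℕ) : poch (a + 1) k = poch a k * (a + k) / a := by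
  rw [eq_div_iff ha, ← poch_succ, poch_succ_left, mul_comm]

lemma poch_sub_one_succ (a : ℝ) (k : ℕ) :
    poch (a - 1) (k + 1) = poch a (k + 1) - (k + 1) * poch a k := by
  rw [poch_succ_left, sub_add_cancel, poch_succ]; ring

lemma poch_natCast_add_half (r k : ℕ) :
    poch (r + 1 / 2) k = (2 * r + 2 * k)! * r ! / ((2 * r)! * 4 ^ k * (r + k)!) := by
  induction k with
  | zero => simp [poch_zero, Nat.factorial_ne_zero]
  | succ k ih =>
    rw [poch_succ, ih, show 2 * r + 2 * (k + 1) = 2 * r + 2 * k + 1 + 1 by ring,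
      ← add_assoc, Nat.factorial_succ, Nat.factorial_succ, Nat.factorial_succ]
    field_simp
    push_cast
    ring

noncomputable def hgCoeff (n : ℕ) (b c : ℝ) (s : ℕ) : ℝ := poch (-n) s * poch b s / (poch c s * s !)

/-- The terminating hypergeometric polynomial `₂F₁(-n, b; c; x)`. -/
noncomputable def hgPoly (n : ℕ) (b c x : ℝ) : ℝ := ∑ s ∈ range (n + 1), hgCoeff n b c s * x ^ s

lemma hgCoeff_zero (n : ℕ) (b c : ℝ) : hgCoeff n b c 0 = 1 := by simp [hgCoeff, poch_zero]

lemma hgCoeff_of_lt {n s : ℕ} (b c : ℝ) (h : n < s) : hgCoeff n b c s = 0 := by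
  simp [hgCoeff, poch_neg_natCast_of_lt h]

lemma hgPoly_zero_left (b c x : ℝ) : hgPoly 0 b c x = 1 := by simp [hgPoly, hgCoeff_zero]

lemma hgPoly_one_left (b c x : ℝ) : hgPoly 1 b c x = 1 - b / c * x := by
  rw [hgPoly, sum_range_succ, sum_range_one, hgCoeff_zero, hgCoeff]
  simp only [poch_succ, poch_zero, Nat.factorial_one, Nat.cast_zero, Nat.cast_one]
  ring

lemma hgPoly_eq_sum_range {n N : ℕ} (h : n < N) (b c x : ℝ) :
    hgPoly n b c x = ∑ s ∈ range N, hgCoeff n b c s * x ^ s := by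
  refine sum_subset (range_subset_range.2 h) fun s _ hs => ?_
  rw [hgCoeff_of_lt b c (by simpa using hs), zero_mul]

lemma hgCoeff_succ_succ (b c : ℝ) (n s : ℕ) :
    hgCoeff (n + 1) b c (s + 1) = hgCoeff n b c (s + 1) - b / c * hgCoeff n (b + 1) (c + 1) s := by
  simp only [hgCoeff]
  rw [show (-((n + 1 : ℕ) : ℝ)) = -n - 1 by push_cast; ring, poch_sub_one_succ,
    poch_succ_left b, poch_succ_left c, Nat.factorial_succ]
  push_cast
  field_simp

/-- Chu–Vandermonde. -/
theorem hgPoly_one (b : ℝ) {c : ℝ} (hc : 0 < c) (n : ℕ) :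
    hgPoly n b c 1 = poch (c - b) n / poch c n := by
  simp only [hgPoly, one_pow, mul_one]
  induction n generalizing b c with
  | zero => simp [hgCoeff_zero, poch_zero]
  | succ n ih =>
    have hshift : ∑ s ∈ range (n + 1), hgCoeff n b c (s + 1) + 1 = poch (c - b) n / poch c n := by
      rw [← hgCoeff_zero n b c, ← sum_range_succ', sum_range_succ, hgCoeff_of_lt _ _ (by omega),
        add_zero, ih b hc]
    have hc' : 0 < c + 1 := by linarith
    rw [sum_range_succ', sum_congr rfl fun s _ => hgCoeff_succ_succ b c n s, sum_sub_distrib,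
      ← mul_sum, ih (b + 1) hc', hgCoeff_zero, sub_add_eq_add_sub, hshift,
      add_sub_add_right_eq_sub, poch_succ (c - b), poch_succ c, poch_add_one_eq hc.ne']
    have hpoch : poch c n ≠ 0 := (poch_pos hc n).ne'
    field_simp
    ring

lemma hgCoeff_add_mul_choose (b c : ℝ) (r d s : ℕ) :
    hgCoeff (r + d) b c (r + s) * (r + s).choose r =
      hgCoeff (r + d) b c r * hgCoeff d (b + r) (c + r) s := by
  have hch : ((r + s).choose r : ℝ) = (r + s)! / (r ! * s !) := by
    rw [Nat.cast_choose ℝ (Nat.le_add_right r s), Nat.add_sub_cancel_left]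
  simp only [hgCoeff, poch_add, hch, show -((r + d : ℕ) : ℝ) + r = -d by push_cast; ring]
  field_simp

lemma sum_hgCoeff_mul_choose (b c : ℝ) (r d : ℕ) :
    ∑ i ∈ range (r + d + 1), hgCoeff (r + d) b c i * i.choose r =
      hgCoeff (r + d) b c r * hgPoly d (b + r) (c + r) 1 := by
  have hlow : ∑ i ∈ range r, hgCoeff (r + d) b c i * i.choose r = 0 :=
    sum_eq_zero fun i hi => by
      rw [Nat.choose_eq_zero_of_lt (mem_range.1 hi), Nat.cast_zero, mul_zero]
  rw [add_assoc, sum_range_add, hlow, zero_add, hgPoly, mul_sum]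
  simp only [hgCoeff_add_mul_choose, one_pow, mul_one]

theorem hgPoly_one_sub (n : ℕ) (b c y : ℝ) :
    hgPoly n b c (1 - y) =
      ∑ r ∈ range (n + 1), hgCoeff n b c r * hgPoly (n - r) (b + r) (c + r) 1 * (-y) ^ r := by
  have hbinom : ∀ i ∈ range (n + 1),
      (1 - y) ^ i = ∑ r ∈ range (n + 1), (-y) ^ r * i.choose r := by
    intro i hi
    rw [sub_eq_neg_add, add_pow]
    simp only [one_pow, mul_one]
    refine sum_subset (range_subset_range.2 (by simpa using hi)) fun r _ hr => ?_
    rw [Nat.choose_eq_zero_of_lt (by simpa using hr), Nat.cast_zero, mul_zero]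
  rw [hgPoly, sum_congr rfl fun i hi => by rw [hbinom i hi, mul_sum], sum_comm]
  refine sum_congr rfl fun r hr => ?_
  obtain ⟨d, rfl⟩ := Nat.exists_eq_add_of_le (Nat.lt_succ_iff.1 (mem_range.1 hr))
  rw [Nat.add_sub_cancel_left, ← sum_hgCoeff_mul_choose, sum_mul]
  exact sum_congr rfl fun i _ => by ring

open Polynomial in
lemma iteratedDeriv_polynomial_eval (p : ℝ[X]) (n : ℕ) :
    iteratedDeriv n (fun x => p.eval x) = fun x => (derivative^[n] p).eval x := by
  induction n with
  | zero => simp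
  | succ n ih =>
    rw [iteratedDeriv_succ, ih, Function.iterate_succ_apply']
    exact funext fun x => Polynomial.deriv _

open Polynomial in
theorem legendreP_eq_sum (n : ℕ) (t : ℝ) :
    legendreP n t = 1 / (2 ^ n * n !) *
      ∑ j ∈ range (n + 1),
        (-1) ^ (j + n) * n.choose j * (2 * j).descFactorial n * t ^ (2 * j - n) := by
  have hpoly : (fun y : ℝ => (y ^ 2 - 1) ^ n) = fun y => ((X ^ 2 - 1 : ℝ[X]) ^ n).eval y := by
    simp
  rw [legendreP, hpoly, iteratedDeriv_polynomial_eval]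
  dsimp only
  rw [sub_pow, iterate_derivative_sum, eval_finsetSum]
  congr 1
  refine sum_congr rfl fun j _ => ?_
  have : ((-1) ^ (j + n) * (X ^ 2) ^ j * 1 ^ (n - j) * (n.choose j : ℝ[X])) =
      C ((-1 : ℝ) ^ (j + n) * n.choose j) * X ^ (2 * j) := by
    simp only [one_pow, mul_one, ← pow_mul, map_mul, map_pow, map_neg, map_one, map_natCast]
    ring
  rw [this, iterate_derivative_C_mul, iterate_derivative_X_pow_eq_natCast_mul]
  simp only [eval_mul, eval_C, eval_natCast, eval_pow, eval_X]
  ring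

lemma legendreP_two_mul_eq_sum (k : ℕ) (t : ℝ) :
    legendreP (2 * k) t = 1 / (2 ^ (2 * k) * (2 * k)!) *
      ∑ r ∈ range (k + 1),
        (-1) ^ (k + r) * (2 * k).choose (k + r) * (2 * k + 2 * r).descFactorial (2 * k) *
          t ^ (2 * r) := by
  have hlow : ∑ j ∈ range k, (-1 : ℝ) ^ (j + 2 * k) * (2 * k).choose j *
      (2 * j).descFactorial (2 * k) * t ^ (2 * j - 2 * k) = 0 :=
    sum_eq_zero fun j hj => by
      rw [Nat.descFactorial_eq_zero_iff_lt.2 (by have := mem_range.1 hj; omega), Nat.cast_zero,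
        mul_zero, zero_mul]
  rw [legendreP_eq_sum, show 2 * k + 1 = k + (k + 1) by ring, sum_range_add, hlow, zero_add]
  congr 1
  refine sum_congr rfl fun r _ => ?_
  rw [show 2 * (k + r) = 2 * k + 2 * r by ring, Nat.add_sub_cancel_left, pow_add _ (k + r), pow_mul]
  norm_num

/-- Both sides equal `(-1)^d (4r + 2d)! / (4^(r+d) (2r + d)! d! (2r)!)`: the coefficient of `t^(2r)`
in `P_{2(r+d)}(t)`, read off from Rodrigues' formula and from `₂F₁(-k, k + 1/2; 1; 1 - t²)`. -/
lemma legendreP_two_mul_coeff (r d : ℕ) :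
    1 / (2 ^ (2 * (r + d)) * (2 * (r + d))! : ℝ) * ((-1) ^ (r + d + r) *
      (2 * (r + d)).choose (r + d + r) * (2 * (r + d) + 2 * r).descFactorial (2 * (r + d))) =
    hgCoeff (r + d) ((r + d : ℕ) + 1 / 2) 1 r *
      (poch (1 + r - ((r + d : ℕ) + 1 / 2 + r)) d / poch (1 + r) d) * (-1) ^ r := by
  have hneg₁ : poch (-((r + d : ℕ) : ℝ)) r = (-1) ^ r * ((d + r)! / d !) := by
    rw [poch_neg, ← poch_natCast_add_one]; push_cast; ring_nf
  have hneg₂ : poch (1 + r - ((r + d : ℕ) + 1 / 2 + r)) d = (-1) ^ d * poch (r + 1 / 2) d := by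
    rw [show (1 + r - ((r + d : ℕ) + 1 / 2 + r) : ℝ) = -(r + d - 1 / 2) by push_cast; ring,
      poch_neg]
    ring_nf
  have hchoose :
      ((2 * (r + d)).choose (r + d + r) : ℝ) = (2 * (r + d))! / ((r + d + r)! * d !) := by
    rw [Nat.cast_choose ℝ (by omega), show 2 * (r + d) - (r + d + r) = d by omega]
  have hdesc : ((2 * (r + d) + 2 * r).descFactorial (2 * (r + d)) : ℝ) =
      (2 * (r + d) + 2 * r)! / (2 * r)! := by
    rw [← Nat.factorial_mul_descFactorial (show 2 * (r + d) ≤ 2 * (r + d) + 2 * r by omega),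
      Nat.add_sub_cancel_left]
    push_cast
    field_simp
  have hfour : (2 : ℝ) ^ (2 * (r + d)) = 4 ^ (r + d) := by rw [pow_mul]; norm_num
  rw [hfour, hchoose, hdesc, hgCoeff, hneg₁, hneg₂, poch_natCast_add_half, poch_natCast_add_half,
    poch_one, add_comm (1 : ℝ), poch_natCast_add_one]
  field_simp
  ring_nf

theorem legendreP_two_mul (k : ℕ) (t : ℝ) :
    legendreP (2 * k) t = hgPoly k (k + 1 / 2) 1 (1 - t ^ 2) := by
  rw [hgPoly_one_sub, legendreP_two_mul_eq_sum, mul_sum]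
  refine sum_congr rfl fun r hr => ?_
  obtain ⟨d, rfl⟩ := Nat.exists_eq_add_of_le (Nat.lt_succ_iff.1 (mem_range.1 hr))
  rw [Nat.add_sub_cancel_left, hgPoly_one _ (by positivity), neg_pow (t ^ 2), ← pow_mul,
    ← mul_assoc, legendreP_two_mul_coeff]
  ring

theorem jacobiP_zero_left (k : ℕ) (β x : ℝ) :
    jacobiP k 0 β x = hgPoly k (k + β + 1) 1 ((1 - x) / 2) := by
  simp [jacobiP, hgPoly, hgCoeff, poch_one, Nat.factorial_ne_zero]

lemma hgCoeff_contiguous (m i : ℕ) :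
    4 * (m + 1) * (4 * m + 11) * ((2 * m + 4) * hgCoeff m (m + 5 / 2) 1 i +
        (2 * m + 3) * hgCoeff (m + 1) ((m + 1 : ℕ) + 5 / 2) 1 i) +
      2 * (2 * m + 7) * (4 * m + 7) * ((2 * m + 6) * hgCoeff (m + 1) ((m + 1 : ℕ) + 5 / 2) 1 i +
        (2 * m + 5) * hgCoeff (m + 2) ((m + 2 : ℕ) + 5 / 2) 1 i) =
    2 * (4 * m + 7) * (4 * m + 9) * (4 * m + 11) * hgCoeff (m + 2) ((m + 2 : ℕ) + 1 / 2) 1 i := by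
  have e₁ : poch (-((m + 1 : ℕ) : ℝ)) i = poch (-(m + 2)) i * (-(m + 2) + i) / -(m + 2) := by
    convert poch_add_one_eq (a := -(m + 2)) (neg_ne_zero.2 (by positivity)) i using 2
    push_cast; ring
  have e₀ : poch (-(m : ℝ)) i = poch (-((m + 1 : ℕ) : ℝ)) i * (-(m + 1) + i) / -(m + 1) := by
    convert poch_add_one_eq (a := -((m + 1 : ℕ) : ℝ)) (neg_ne_zero.2 (by positivity)) i using 2 <;>
      push_cast <;> ring
  have f₁ : poch ((m + 1 : ℕ) + 5 / 2) i = poch (m + 5 / 2) i * (m + 5 / 2 + i) / (m + 5 / 2) := by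
    convert poch_add_one_eq (a := m + 5 / 2) (by positivity) i using 2; push_cast; ring
  have f₂ : poch ((m + 2 : ℕ) + 5 / 2) i =
      poch ((m + 1 : ℕ) + 5 / 2) i * (m + 7 / 2 + i) / (m + 7 / 2) := by
    convert poch_add_one_eq (a := (m + 1 : ℕ) + 5 / 2) (by positivity) i using 2 <;>
      push_cast <;> ring
  have g : poch ((m + 2 : ℕ) + 1 / 2) i = poch (m + 5 / 2) i := by push_cast; ring_nf
  simp only [hgCoeff, poch_one]
  rw [e₀, e₁, f₂, f₁, g]
  field_simp
  push_cast
  ring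

theorem hgPoly_contiguous (m : ℕ) (x : ℝ) :
    4 * (m + 1) * (4 * m + 11) * ((2 * m + 4) * hgPoly m (m + 5 / 2) 1 x +
        (2 * m + 3) * hgPoly (m + 1) ((m + 1 : ℕ) + 5 / 2) 1 x) +
      2 * (2 * m + 7) * (4 * m + 7) * ((2 * m + 6) * hgPoly (m + 1) ((m + 1 : ℕ) + 5 / 2) 1 x +
        (2 * m + 5) * hgPoly (m + 2) ((m + 2 : ℕ) + 5 / 2) 1 x) =
    2 * (4 * m + 7) * (4 * m + 9) * (4 * m + 11) * hgPoly (m + 2) ((m + 2 : ℕ) + 1 / 2) 1 x := by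
  simp only [hgPoly_eq_sum_range (by omega : m < m + 3),
    hgPoly_eq_sum_range (by omega : m + 1 < m + 3), hgPoly_eq_sum_range (by omega : m + 2 < m + 3),
    mul_sum, ← sum_add_distrib]
  exact sum_congr rfl fun i _ => by linear_combination x ^ i * hgCoeff_contiguous m i

theorem sum_gamma_mul_hgPoly_eq (m : ℕ) (x : ℝ) :
    (2 / √π) * ∑ j ∈ range (m + 1), (4 * (j : ℝ) + 5) * Gamma (j + 5 / 2) * ((-1) ^ j / j !) *
        hgPoly (j + 1) ((j + 1 : ℕ) + 1 / 2) 1 x =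
      (-1) ^ m * (4 * Gamma (m + 7 / 2) / (√π * Gamma (m + 1) * (4 * m + 7))) *
        ((2 * m + 4) * hgPoly m (m + 5 / 2) 1 x +
          (2 * m + 3) * hgPoly (m + 1) ((m + 1 : ℕ) + 5 / 2) 1 x) := by
  induction m with
  | zero =>
    have hΓ : Gamma (7 / 2) = 5 / 2 * Gamma (5 / 2) := by
      rw [← Gamma_add_one (by norm_num)]; norm_num
    rw [sum_range_one, hgPoly_zero_left, hgPoly_one_left, hgPoly_one_left]
    simp only [Nat.cast_zero, zero_add, Nat.cast_one, mul_zero, pow_zero, Nat.factorial_zero,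
      div_one, Gamma_one, hΓ]
    field_simp
    ring
  | succ m ih =>
    have hΓ₁ : Gamma ((m + 1 : ℕ) + 5 / 2) = Gamma (m + 7 / 2) := by push_cast; ring_nf
    have hΓ₂ : Gamma ((m + 1 : ℕ) + 7 / 2) = (m + 7 / 2) * Gamma (m + 7 / 2) := by
      rw [← Gamma_add_one (by positivity)]; push_cast; ring_nf
    rw [sum_range_succ, mul_add, ih, hΓ₁, hΓ₂, show m + 1 + 1 = m + 2 from rfl]
    simp only [Gamma_nat_eq_factorial, Nat.factorial_succ]
    have := hgPoly_contiguous m x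
    -- keeps `field_simp` away from the parameters of `hgPoly`
    generalize hgPoly m (m + 5 / 2) 1 x = A₀, hgPoly (m + 1) ((m + 1 : ℕ) + 5 / 2) 1 x = A₁,
      hgPoly (m + 2) ((m + 2 : ℕ) + 5 / 2) 1 x = A₂,
      hgPoly (m + 2) ((m + 2 : ℕ) + 1 / 2) 1 x = B at this ⊢
    push_cast at this ⊢
    field_simp
    linear_combination 2 * (-1) ^ m * this

theorem stmt14 (m : ℕ) (t : ℝ) :
    (2 / Real.sqrt Real.pi) *
        ∑ j ∈ Finset.range (m+1),
          (4*(j:ℝ) + 5) * Real.Gamma ((j:ℝ) + 5/2) * ((-1:ℝ)^j / (Nat.factorial j : ℝ)) *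
            legendreP (2*j + 2) t =
      (-1:ℝ)^m * (4 * Real.Gamma ((m:ℝ) + 7/2) /
          (Real.sqrt Real.pi * Real.Gamma ((m:ℝ) + 1) * (4*(m:ℝ) + 7))) *
        ((2*(m:ℝ) + 4) * jacobiP m 0 (3/2) (2*t^2 - 1)
          + (2*(m:ℝ) + 3) * jacobiP (m+1) 0 (3/2) (2*t^2 - 1)) := by
  have hP (j : ℕ) : legendreP (2 * j + 2) t = hgPoly (j + 1) ((j + 1 : ℕ) + 1 / 2) 1 (1 - t ^ 2) :=
    legendreP_two_mul (j + 1) t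
  have hJ (k : ℕ) : jacobiP k 0 (3 / 2) (2 * t ^ 2 - 1) = hgPoly k (k + 5 / 2) 1 (1 - t ^ 2) := by
    rw [jacobiP_zero_left]; ring_nf
  simp only [hP, hJ]
  exact sum_gamma_mul_hgPoly_eq m (1 - t ^ 2)
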